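/- Let z = (α, β, M) ∈ Z with |p| ≤ rs, |α| < r and |β| < s. Then z ∈ K_{r,s}^{Λ,1} if and only if there exist nonzero vectors ᾱ, β̄ ∈ ℝ³ such that: (i) M₀(z) + G(z)·(ᾱ/|ᾱ|)⊗(β̄/|β̄|) = 0; (ii) (β·β̄)·(r² − |α|²)/(s² − |β|²) = α·ᾱ and (r² − |α|²)/(s² − |β|²) = |ᾱ|²/|β̄|²; and (iii) (α − β)·(ᾱ × β̄) = 0, where × is the cross product on ℝ³. -/

import Mathlib

open Matrix

noncomputable section

/-- Vectors in ℝ³. -/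
abbrev V3 := Fin 3 → ℝ
/-- 3×3 real matrices. -/
abbrev Mat3 := Matrix (Fin 3) (Fin 3) ℝ
/-- The state space Z = ℝ³ × ℝ³ × ℝ^{3×3}. -/
abbrev Z := V3 × V3 × Mat3

/-- Euclidean dot product on ℝ³. -/
def dot3 (u v : V3) : ℝ := ∑ i, u i * v i
/-- Euclidean norm on ℝ³. -/
def norm3 (v : V3) : ℝ := Real.sqrt (dot3 v v)
/-- Outer (tensor) product u ⊗ v. -/
def outer (u v : V3) : Mat3 := Matrix.vecMulVec u v

/-- The constraint set K_{r,s}. -/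
def Krs (r s p : ℝ) : Set Z :=
  {z | z.2.2 = outer z.1 z.2.1 + p • (1 : Mat3) ∧ norm3 z.1 = r ∧ norm3 z.2.1 = s}

/-- The wave cone Λ. -/
def waveCone : Set Z :=
  {z | ∃ (ξ : V3) (c : ℝ), ξ ≠ 0 ∧ z.2.2 *ᵥ ξ + c • z.1 = 0 ∧
    z.2.2ᵀ *ᵥ ξ + c • z.2.1 = 0 ∧ dot3 z.1 ξ = 0 ∧ dot3 z.2.1 ξ = 0}

/-- M₀(z) = α⊗β − M + p·Id. -/
def M0 (p : ℝ) (z : Z) : Mat3 := outer z.1 z.2.1 - z.2.2 + p • (1 : Mat3)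

/-- G(z) = √((r² − |α|²)(s² − |β|²)). -/
def Gfun (r s : ℝ) (z : Z) : ℝ :=
  Real.sqrt ((r ^ 2 - norm3 z.1 ^ 2) * (s ^ 2 - norm3 z.2.1 ^ 2))

/-- Iterated lamination sets K_{r,s}^{Λ,i}. -/
def lamSet (r s p : ℝ) : ℕ → Set Z
  | 0 => Krs r s p
  | (i + 1) => {z | ∃ zb ∈ waveCone, ∃ t₁ t₂ : ℝ, t₁ ≤ 0 ∧ 0 ≤ t₂ ∧
      z + t₁ • zb ∈ lamSet r s p i ∧ z + t₂ • zb ∈ lamSet r s p i}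

/-- Nuclear norm: trace of the PSD square root of AᵀA. -/
def nuclearNorm (A : Mat3) : ℝ :=
  ((Matrix.isHermitian_conjTranspose_mul_self A).eigenvectorUnitary.1 *
    Matrix.diagonal (Real.sqrt ∘ (Matrix.isHermitian_conjTranspose_mul_self A).eigenvalues) *
    (star (Matrix.isHermitian_conjTranspose_mul_self A).eigenvectorUnitary : Mat3)).trace

/-- f₀(A) = (A₂₃, A₃₁, A₁₂) (0-indexed: (A 1 2, A 2 0, A 0 1)). -/
def f0 (A : Mat3) : V3 := ![A 1 2, A 2 0, A 0 1]

/-- Frobenius norm of a matrix. -/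
def frobNorm (A : Mat3) : ℝ := Real.sqrt (∑ i, ∑ j, A i j ^ 2)

/-- Λ-convexity of a set. -/
def LambdaConvex (S : Set Z) : Prop :=
  ∀ z₁ ∈ S, ∀ z₂ ∈ S, z₁ - z₂ ∈ waveCone →
    ∀ t : ℝ, t ∈ Set.Icc (0 : ℝ) 1 → z₁ + t • (z₂ - z₁) ∈ S

/-- The Λ-convex hull of K_{r,s}: the intersection of all Λ-convex sets containing it. -/
def lambdaHull (r s p : ℝ) : Set Z := ⋂₀ {S : Set Z | LambdaConvex S ∧ Krs r s p ⊆ S}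

set_option maxHeartbeats 1000000

lemma dot3_self_nonneg (v : V3) : 0 ≤ dot3 v v :=
  Finset.sum_nonneg fun _ _ => mul_self_nonneg _

lemma norm3_sq (v : V3) : norm3 v ^ 2 = dot3 v v :=
  Real.sq_sqrt (dot3_self_nonneg v)

lemma norm3_nonneg (v : V3) : 0 ≤ norm3 v := Real.sqrt_nonneg _

lemma dot3_self_pos {v : V3} (h : v ≠ 0) : 0 < dot3 v v := by
  rcases Function.ne_iff.mp h with ⟨i, hi⟩
  refine Finset.sum_pos' (fun j _ => mul_self_nonneg _) ⟨i, Finset.mem_univ i, ?_⟩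
  exact mul_self_pos.mpr hi

lemma ne_zero_of_dot3_pos {v : V3} (h : 0 < dot3 v v) : v ≠ 0 := by
  rintro rfl; simp [dot3] at h

lemma norm3_pos {v : V3} (h : v ≠ 0) : 0 < norm3 v :=
  Real.sqrt_pos.2 (dot3_self_pos h)

lemma norm3_eq_of_dot {v : V3} {r : ℝ} (hr : 0 ≤ r) (h : dot3 v v = r ^ 2) : norm3 v = r := by
  rw [norm3, h, Real.sqrt_sq hr]

lemma dot_of_norm3_eq {v : V3} {r : ℝ} (h : norm3 v = r) : dot3 v v = r ^ 2 := by
  rw [← norm3_sq, h]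

lemma dot3_expand (x y : V3) (t : ℝ) :
    dot3 (x + t • y) (x + t • y) = dot3 x x + 2*t*dot3 x y + t^2 * dot3 y y := by
  simp [dot3, Fin.sum_univ_three]; ring

lemma sqrt_helper {A B g x y : ℝ} (hA : A = g * x) (hB : B = g * y) (hg : 0 ≤ g)
    (hx : 0 ≤ x) : Real.sqrt (A * B) = g * (Real.sqrt x * Real.sqrt y) := by
  rw [hA, hB, show g*x*(g*y) = (g*g)*(x*y) by ring, Real.sqrt_mul (mul_self_nonneg g),
    Real.sqrt_mul_self hg, Real.sqrt_mul hx]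

private lemma stmt3_fwd (r s p : ℝ) (hr : 0 < r) (hs : 0 < s) (z : Z)
    (hp : |p| ≤ r * s) (hα : norm3 z.1 < r) (hβ : norm3 z.2.1 < s) :
    z ∈ lamSet r s p 1 → ∃ a b : V3, a ≠ 0 ∧ b ≠ 0 ∧
      M0 p z + Gfun r s z • outer ((norm3 a)⁻¹ • a) ((norm3 b)⁻¹ • b) = 0 ∧
      dot3 z.2.1 b * ((r ^ 2 - norm3 z.1 ^ 2) / (s ^ 2 - norm3 z.2.1 ^ 2)) = dot3 z.1 a ∧
      (r ^ 2 - norm3 z.1 ^ 2) / (s ^ 2 - norm3 z.2.1 ^ 2) = norm3 a ^ 2 / norm3 b ^ 2 ∧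
      dot3 (z.1 - z.2.1) (crossProduct a b) = 0 := by
  obtain ⟨α, β, M⟩ := z
  dsimp only at hα hβ ⊢
  intro hmem
  simp only [lamSet, Krs, waveCone, Set.mem_setOf_eq, Prod.mk_add_mk, Prod.smul_mk] at hmem
  obtain ⟨⟨u, v, W⟩, ⟨ξ, c, hξ, hWξ, hWTξ, hdu, hdv⟩, t₁, t₂, ht₁, ht₂, h₁, h₂⟩ := hmem
  obtain ⟨hM₁, hA₁, hB₁⟩ := h₁
  obtain ⟨hM₂, hA₂, hB₂⟩ := h₂
  dsimp only at hM₁ hA₁ hB₁ hM₂ hA₂ hB₂ hWξ hWTξ hdu hdv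
  -- t₁ < 0 < t₂
  have ht₁n : t₁ < 0 := by
    rcases ht₁.lt_or_eq with h | h
    · exact h
    · rw [h, zero_smul, add_zero] at hA₁; exact absurd hA₁ (ne_of_lt hα)
  have ht₂p : 0 < t₂ := by
    rcases ht₂.lt_or_eq with h | h
    · exact h
    · rw [← h, zero_smul, add_zero] at hA₂; exact absurd hA₂ (ne_of_lt hα)
  have htne : (0:ℝ) < t₂ - t₁ := by linarith
  -- quadratic identities
  have q₁ : dot3 α α + 2*t₁*dot3 α u + t₁^2*dot3 u u = r^2 := by
    rw [← dot3_expand]; exact dot_of_norm3_eq hA₁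
  have q₂ : dot3 α α + 2*t₂*dot3 α u + t₂^2*dot3 u u = r^2 := by
    rw [← dot3_expand]; exact dot_of_norm3_eq hA₂
  have qb₁ : dot3 β β + 2*t₁*dot3 β v + t₁^2*dot3 v v = s^2 := by
    rw [← dot3_expand]; exact dot_of_norm3_eq hB₁
  have qb₂ : dot3 β β + 2*t₂*dot3 β v + t₂^2*dot3 v v = s^2 := by
    rw [← dot3_expand]; exact dot_of_norm3_eq hB₂
  have hx : 2*dot3 α u + (t₁+t₂)*dot3 u u = 0 := by
    have h : (t₁ - t₂) * (2*dot3 α u + (t₁+t₂)*dot3 u u) = 0 := by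
      linear_combination q₁ - q₂
    rcases mul_eq_zero.mp h with h | h
    · exact absurd h (by intro hh; linarith)
    · exact h
  have hy : 2*dot3 β v + (t₁+t₂)*dot3 v v = 0 := by
    have h : (t₁ - t₂) * (2*dot3 β v + (t₁+t₂)*dot3 v v) = 0 := by
      linear_combination qb₁ - qb₂
    rcases mul_eq_zero.mp h with h | h
    · exact absurd h (by intro hh; linarith)
    · exact h
  have hR : r^2 - dot3 α α = -(t₁*t₂)*dot3 u u := by linear_combination t₁*hx - q₁
  have hS : s^2 - dot3 β β = -(t₁*t₂)*dot3 v v := by linear_combination t₁*hy - qb₁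
  have hRpos : 0 < r^2 - dot3 α α := by
    have h := norm3_sq α; nlinarith [norm3_nonneg α]
  have hSpos : 0 < s^2 - dot3 β β := by
    have h := norm3_sq β; nlinarith [norm3_nonneg β]
  have htt : 0 < -(t₁*t₂) := by nlinarith
  have hnu : 0 < dot3 u u := by nlinarith [dot3_self_nonneg u]
  have hnv : 0 < dot3 v v := by nlinarith [dot3_self_nonneg v]
  have hune : u ≠ 0 := ne_zero_of_dot3_pos hnu
  have hvne : v ≠ 0 := ne_zero_of_dot3_pos hnv
  have hnormu : 0 < norm3 u := norm3_pos hune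
  have hnormv : 0 < norm3 v := norm3_pos hvne
  -- matrix entries
  have e₁ : ∀ i j, M i j + t₁ * W i j =
      (α i + t₁ * u i) * (β j + t₁ * v j) + (if i = j then p else 0) := by
    intro i j
    have h := congrFun (congrFun hM₁ i) j
    simpa [outer, Matrix.vecMulVec_apply, Matrix.add_apply, Matrix.smul_apply,
      Matrix.one_apply, smul_eq_mul, mul_ite, mul_one, mul_zero] using h
  have e₂ : ∀ i j, M i j + t₂ * W i j =
      (α i + t₂ * u i) * (β j + t₂ * v j) + (if i = j then p else 0) := by
    intro i j
    have h := congrFun (congrFun hM₂ i) j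
    simpa [outer, Matrix.vecMulVec_apply, Matrix.add_apply, Matrix.smul_apply,
      Matrix.one_apply, smul_eq_mul, mul_ite, mul_one, mul_zero] using h
  have hW : ∀ i j, (t₂ - t₁) * W i j =
      (α i + t₂ * u i) * (β j + t₂ * v j) - (α i + t₁ * u i) * (β j + t₁ * v j) := by
    intro i j; linear_combination e₂ i j - e₁ i j
  have hM : ∀ i j, M i j = α i * β j + (if i = j then p else 0) - t₁*t₂*(u i * v j) := by
    intro i j
    have h : (t₂ - t₁) * (M i j) =
        (t₂ - t₁) * (α i * β j + (if i = j then p else 0) - t₁*t₂*(u i * v j)) := by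
      linear_combination t₂ * e₁ i j - t₁ * e₂ i j
    exact mul_left_cancel₀ (ne_of_gt htne) h
  -- G value
  have hG : Gfun r s (α, β, M) = -(t₁*t₂)*(norm3 u * norm3 v) := by
    rw [Gfun]
    dsimp only
    rw [norm3_sq α, norm3_sq β]
    exact sqrt_helper hR hS (le_of_lt htt) (dot3_self_nonneg u)
  have hg : Gfun r s (α, β, M) * ((norm3 u)⁻¹ * (norm3 v)⁻¹) = -(t₁*t₂) := by
    rw [hG]; field_simp
  -- wave cone consequences
  have key₁ : ∀ i, (dot3 β ξ + c) * u i = 0 := by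
    intro i
    have w := congrFun hWξ i
    simp only [Pi.add_apply, Pi.smul_apply, smul_eq_mul, Pi.zero_apply, Matrix.mulVec,
      dotProduct, Fin.sum_univ_three] at w
    have hc : (t₂ - t₁) * ((dot3 β ξ + c) * u i) = 0 := by
      simp only [dot3, Fin.sum_univ_three] at hdv ⊢
      linear_combination (t₂ - t₁) * w - ξ 0 * hW i 0 - ξ 1 * hW i 1 - ξ 2 * hW i 2
        - (t₂*(α i + t₂*u i) - t₁*(α i + t₁*u i)) * hdv
    exact mul_left_cancel₀ (ne_of_gt htne) (by linarith [hc])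
  have key₂ : ∀ i, (dot3 α ξ + c) * v i = 0 := by
    intro i
    have w := congrFun hWTξ i
    simp only [Pi.add_apply, Pi.smul_apply, smul_eq_mul, Pi.zero_apply, Matrix.mulVec,
      Matrix.transpose_apply, dotProduct, Fin.sum_univ_three] at w
    have hc : (t₂ - t₁) * ((dot3 α ξ + c) * v i) = 0 := by
      simp only [dot3, Fin.sum_univ_three] at hdu ⊢
      linear_combination (t₂ - t₁) * w - ξ 0 * hW 0 i - ξ 1 * hW 1 i - ξ 2 * hW 2 i
        - (t₂*(β i + t₂*v i) - t₁*(β i + t₁*v i)) * hdu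
    exact mul_left_cancel₀ (ne_of_gt htne) (by linarith [hc])
  have hcval : c = -dot3 β ξ := by
    obtain ⟨i₀, hi₀⟩ := Function.ne_iff.mp hune
    rcases mul_eq_zero.mp (key₁ i₀) with h | h
    · linarith
    · exact absurd h hi₀
  have hαβξ : dot3 α ξ = dot3 β ξ := by
    obtain ⟨i₀, hi₀⟩ := Function.ne_iff.mp hvne
    rcases mul_eq_zero.mp (key₂ i₀) with h | h
    · rw [hcval] at h; linarith
    · exact absurd h hi₀
  refine ⟨u, v, hune, hvne, ?_, ?_, ?_, ?_⟩
  · ext i j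
    have h := hM i j
    simp only [M0, outer, Matrix.add_apply, Matrix.sub_apply, Matrix.smul_apply,
      Matrix.vecMulVec_apply, Matrix.one_apply, Pi.smul_apply, smul_eq_mul,
      Matrix.zero_apply, mul_ite, mul_one, mul_zero]
    linear_combination -h + (u i * v j) * hg
  · rw [norm3_sq α, norm3_sq β, hR, hS]
    have h1 : dot3 α u = -(t₁+t₂)/2*dot3 u u := by linarith
    have h2 : dot3 β v = -(t₁+t₂)/2*dot3 v v := by linarith
    rw [h1, h2]
    have ht1ne : t₁ ≠ 0 := ne_of_lt ht₁n
    have ht2ne : t₂ ≠ 0 := ne_of_gt ht₂p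
    have hnvne : dot3 v v ≠ 0 := ne_of_gt hnv
    field_simp
  · rw [norm3_sq α, norm3_sq β, hR, hS, norm3_sq u, norm3_sq v]
    rw [mul_div_mul_left _ _ (ne_of_gt htt)]
  · rw [show dot3 (α - β) (crossProduct u v) = (α - β) ⬝ᵥ crossProduct u v from rfl,
      triple_product_eq_det]
    refine Matrix.exists_mulVec_eq_zero_iff.mp ⟨ξ, hξ, ?_⟩
    have h0 : (α - β) ⬝ᵥ ξ = 0 := by
      simp only [dot3, Fin.sum_univ_three] at hαβξ
      simp only [dotProduct, Fin.sum_univ_three, Pi.sub_apply]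
      linear_combination hαβξ
    have h1 : u ⬝ᵥ ξ = 0 := hdu
    have h2 : v ⬝ᵥ ξ = 0 := hdv
    funext i
    fin_cases i <;> simp [Matrix.mulVec, dotProduct, Fin.sum_univ_three] <;>
      simp only [dotProduct, Fin.sum_univ_three, Pi.sub_apply] at h0 h1 h2 <;> linarith

private lemma stmt3_rev (r s p : ℝ) (hr : 0 < r) (hs : 0 < s) (z : Z)
    (hp : |p| ≤ r * s) (hα : norm3 z.1 < r) (hβ : norm3 z.2.1 < s) :
    (∃ a b : V3, a ≠ 0 ∧ b ≠ 0 ∧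
      M0 p z + Gfun r s z • outer ((norm3 a)⁻¹ • a) ((norm3 b)⁻¹ • b) = 0 ∧
      dot3 z.2.1 b * ((r ^ 2 - norm3 z.1 ^ 2) / (s ^ 2 - norm3 z.2.1 ^ 2)) = dot3 z.1 a ∧
      (r ^ 2 - norm3 z.1 ^ 2) / (s ^ 2 - norm3 z.2.1 ^ 2) = norm3 a ^ 2 / norm3 b ^ 2 ∧
      dot3 (z.1 - z.2.1) (crossProduct a b) = 0) → z ∈ lamSet r s p 1 := by
  obtain ⟨α, β, M⟩ := z
  dsimp only at hα hβ ⊢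
  rintro ⟨a, b, hane, hbne, hi, hii1, hii2, hiii⟩
  have hna : 0 < dot3 a a := dot3_self_pos hane
  have hnb : 0 < dot3 b b := dot3_self_pos hbne
  have hRpos : 0 < r^2 - dot3 α α := by
    have h := norm3_sq α; nlinarith [norm3_nonneg α]
  have hSpos : 0 < s^2 - dot3 β β := by
    have h := norm3_sq β; nlinarith [norm3_nonneg β]
  rw [norm3_sq α, norm3_sq β] at hii1
  rw [norm3_sq α, norm3_sq β, norm3_sq a, norm3_sq b] at hii2
  have hcross : (r^2 - dot3 α α) * dot3 b b = dot3 a a * (s^2 - dot3 β β) := by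
    field_simp [ne_of_gt hSpos, ne_of_gt hnb] at hii2
    linear_combination hii2
  have hmain : dot3 β b * (r^2 - dot3 α α) = dot3 α a * (s^2 - dot3 β β) := by
    field_simp [ne_of_gt hSpos] at hii1
    linear_combination hii1
  have hba : dot3 β b * dot3 a a = dot3 α a * dot3 b b := by
    have h1 : dot3 β b * dot3 a a * (s^2 - dot3 β β) = dot3 α a * dot3 b b * (s^2 - dot3 β β) := by
      linear_combination dot3 b b * hmain - dot3 β b * hcross
    exact mul_right_cancel₀ (ne_of_gt hSpos) h1
  set k : ℝ := 2 * dot3 α a / dot3 a a with hk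
  have h4 : 2 * dot3 α a = k * dot3 a a := by rw [hk]; field_simp
  have h5 : 2 * dot3 β b = k * dot3 b b := by
    rw [hk]
    rw [div_mul_eq_mul_div, eq_div_iff (ne_of_gt hna)]
    linear_combination 2 * hba
  set m : ℝ := Real.sqrt (k^2 + 4*(r^2 - dot3 α α)/dot3 a a) with hm
  have hm2pos : 0 < k^2 + 4*(r^2 - dot3 α α)/dot3 a a := by positivity
  have hmpos : 0 < m := Real.sqrt_pos.2 hm2pos
  have hmsq : m^2 = k^2 + 4*(r^2 - dot3 α α)/dot3 a a := Real.sq_sqrt (le_of_lt hm2pos)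
  have hk2 : k < m := by nlinarith [div_pos (by linarith : (0:ℝ) < 4*(r^2 - dot3 α α)) hna]
  have hk1 : -m < k := by nlinarith [div_pos (by linarith : (0:ℝ) < 4*(r^2 - dot3 α α)) hna]
  set l : ℝ := (1 - k/m)/2 with hl
  have hl0 : 0 < l := by
    rw [hl]; have : k/m < 1 := (div_lt_one hmpos).2 hk2; linarith
  have hl1 : l < 1 := by
    rw [hl]; have : -1 < k/m := by rw [lt_div_iff₀ hmpos]; linarith
    linarith
  have h1 : (1 - 2*l)*m = k := by rw [hl]; field_simp; ring
  have h2 : l*(1-l)*m^2*dot3 a a = r^2 - dot3 α α := by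
    have hq : 4*(l*(1-l)*m^2) = m^2 - k^2 := by rw [hl]; field_simp; ring
    have h' : (m^2 - k^2) * dot3 a a = 4*(r^2 - dot3 α α) := by
      rw [hmsq]; field_simp; ring
    linear_combination (dot3 a a / 4) * hq + (1/4) * h'
  have h3 : l*(1-l)*m^2*dot3 b b = s^2 - dot3 β β := by
    have h' : l*(1-l)*m^2*dot3 b b * dot3 a a = (s^2 - dot3 β β) * dot3 a a := by
      linear_combination dot3 b b * h2 + hcross
    exact mul_right_cancel₀ (ne_of_gt hna) h'
  have hαa2 : 2 * dot3 α a = (1-2*l)*m*dot3 a a := by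
    linear_combination h4 - dot3 a a * h1
  have hβb2 : 2 * dot3 β b = (1-2*l)*m*dot3 b b := by
    linear_combination h5 - dot3 b b * h1
  have hRv : r^2 - dot3 α α = l*(1-l)*m^2*dot3 a a := h2.symm
  have hSv : s^2 - dot3 β β = l*(1-l)*m^2*dot3 b b := h3.symm
  have hgnn : 0 ≤ l*(1-l)*m^2 := le_of_lt (mul_pos (mul_pos hl0 (by linarith)) (pow_pos hmpos 2))
  have hGval : Gfun r s (α,β,M) = (l*(1-l)*m^2) * (norm3 a * norm3 b) := by
    rw [Gfun]
    dsimp only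
    rw [norm3_sq α, norm3_sq β]
    exact sqrt_helper hRv hSv hgnn (dot3_self_nonneg a)
  have hgcoef : Gfun r s (α,β,M) * ((norm3 a)⁻¹ * (norm3 b)⁻¹) = l*(1-l)*m^2 := by
    rw [hGval]; field_simp [ne_of_gt (norm3_pos hane), ne_of_gt (norm3_pos hbne)]
  have hM' : ∀ i j, M i j = α i * β j + (if i = j then p else 0) + (l*(1-l)*m^2) * (a i * b j) := by
    intro i j
    have h := congrFun (congrFun hi i) j
    simp only [M0, outer, Matrix.add_apply, Matrix.sub_apply, Matrix.smul_apply,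
      Matrix.vecMulVec_apply, Matrix.one_apply, Pi.smul_apply, smul_eq_mul,
      Matrix.zero_apply, mul_ite, mul_one, mul_zero] at h
    linear_combination -h + (a i * b j) * hgcoef
  -- the xi vector
  have hdet : Matrix.det ![α - β, a, b] = 0 := by
    rw [← triple_product_eq_det]; exact hiii
  obtain ⟨ξ, hξne, hξ0⟩ := Matrix.exists_mulVec_eq_zero_iff.mpr hdet
  have e0 : (α 0 - β 0) * ξ 0 + (α 1 - β 1) * ξ 1 + (α 2 - β 2) * ξ 2 = 0 := by
    have h := congrFun hξ0 0
    simp [Matrix.mulVec, dotProduct, Fin.sum_univ_three] at h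
    linear_combination h
  have e1 : a 0 * ξ 0 + a 1 * ξ 1 + a 2 * ξ 2 = 0 := by
    have h := congrFun hξ0 1
    simp [Matrix.mulVec, dotProduct, Fin.sum_univ_three] at h
    linear_combination h
  have e2 : b 0 * ξ 0 + b 1 * ξ 1 + b 2 * ξ 2 = 0 := by
    have h := congrFun hξ0 2
    simp [Matrix.mulVec, dotProduct, Fin.sum_univ_three] at h
    linear_combination h
  -- the wave cone direction
  refine ⟨(m • a, m • b, m • outer a β + m • outer α b + ((2*l-1)*m^2) • outer a b),
    ⟨ξ, -(dot3 β ξ), hξne, ?_, ?_, ?_, ?_⟩, -(1-l), l, by linarith, le_of_lt hl0, ?_, ?_⟩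
  · funext i
    simp only [Matrix.mulVec, dotProduct, Fin.sum_univ_three, Matrix.add_apply,
      Matrix.smul_apply, outer, Matrix.vecMulVec_apply, Pi.add_apply, Pi.smul_apply,
      smul_eq_mul, Pi.zero_apply, dot3]
    linear_combination (m*α i + (2*l-1)*m^2*a i) * e2
  · funext i
    simp only [Matrix.mulVec, Matrix.transpose_apply, dotProduct, Fin.sum_univ_three,
      Matrix.add_apply, Matrix.smul_apply, outer, Matrix.vecMulVec_apply, Pi.add_apply,
      Pi.smul_apply, smul_eq_mul, Pi.zero_apply, dot3]
    linear_combination (m*β i + (2*l-1)*m^2*b i) * e1 + m * b i * e0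
  · simp only [dot3, Fin.sum_univ_three, Pi.smul_apply, smul_eq_mul]
    linear_combination m * e1
  · simp only [dot3, Fin.sum_univ_three, Pi.smul_apply, smul_eq_mul]
    linear_combination m * e2
  -- membership at t₁ = -(1-l)
  · refine ⟨?_, ?_, ?_⟩
    · show M + (-(1-l)) • (m • outer a β + m • outer α b + ((2*l-1)*m^2) • outer a b)
        = outer (α + (-(1-l)) • (m • a)) (β + (-(1-l)) • (m • b)) + p • 1
      ext i j
      have h := hM' i j
      simp only [Matrix.add_apply, Matrix.smul_apply, outer, Matrix.vecMulVec_apply,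
        Pi.add_apply, Pi.smul_apply, smul_eq_mul, Matrix.one_apply, mul_ite, mul_one, mul_zero]
      linear_combination h
    · show norm3 (α + (-(1-l)) • (m • a)) = r
      rw [smul_smul]
      refine norm3_eq_of_dot (le_of_lt hr) ?_
      rw [dot3_expand]
      linear_combination (-(1-l)*m) * hαa2 - hRv
    · show norm3 (β + (-(1-l)) • (m • b)) = s
      rw [smul_smul]
      refine norm3_eq_of_dot (le_of_lt hs) ?_
      rw [dot3_expand]
      linear_combination (-(1-l)*m) * hβb2 - hSv
  -- membership at t₂ = l
  · refine ⟨?_, ?_, ?_⟩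
    · show M + l • (m • outer a β + m • outer α b + ((2*l-1)*m^2) • outer a b)
        = outer (α + l • (m • a)) (β + l • (m • b)) + p • 1
      ext i j
      have h := hM' i j
      simp only [Matrix.add_apply, Matrix.smul_apply, outer, Matrix.vecMulVec_apply,
        Pi.add_apply, Pi.smul_apply, smul_eq_mul, Matrix.one_apply, mul_ite, mul_one, mul_zero]
      linear_combination h
    · show norm3 (α + l • (m • a)) = r
      rw [smul_smul]
      refine norm3_eq_of_dot (le_of_lt hr) ?_
      rw [dot3_expand]
      linear_combination (l*m) * hαa2 - hRv
    · show norm3 (β + l • (m • b)) = s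
      rw [smul_smul]
      refine norm3_eq_of_dot (le_of_lt hs) ?_
      rw [dot3_expand]
      linear_combination (l*m) * hβb2 - hSv

theorem stmt3 (r s p : ℝ) (hr : 0 < r) (hs : 0 < s) (z : Z)
    (hp : |p| ≤ r * s) (hα : norm3 z.1 < r) (hβ : norm3 z.2.1 < s) :
    z ∈ lamSet r s p 1 ↔ ∃ a b : V3, a ≠ 0 ∧ b ≠ 0 ∧
      M0 p z + Gfun r s z • outer ((norm3 a)⁻¹ • a) ((norm3 b)⁻¹ • b) = 0 ∧
      dot3 z.2.1 b * ((r ^ 2 - norm3 z.1 ^ 2) / (s ^ 2 - norm3 z.2.1 ^ 2)) = dot3 z.1 a ∧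
      (r ^ 2 - norm3 z.1 ^ 2) / (s ^ 2 - norm3 z.2.1 ^ 2) = norm3 a ^ 2 / norm3 b ^ 2 ∧
      dot3 (z.1 - z.2.1) (crossProduct a b) = 0 :=
  ⟨stmt3_fwd r s p hr hs z hp hα hβ, stmt3_rev r s p hr hs z hp hα hβ⟩
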